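/- arXiv:1910.03148 — 2 statements merged into one kernel-verified Lean document; each statement's English description precedes it below -/
import Mathlib

section
/- For each integer n ≥ 2, the matrix σ_n = ((n, 1-n²), (-1, n)) has determinant 1, integer entries, and acting on the upper half-space ℍ³ by Möbius transformations, it sends the point (z_n, t_n) = ((2n²-1)/(2n), 1/(2n)) to the point (0, n). -/
/-!
Since `σ_n` and the point have real coordinates, the action reduces to real arithmetic. With
`z = (2n² - 1)/(2n)` and `t = 1/(2n)` one gets `cz + d = t` and `az + b = 1/2`, so the numerator
`(az + b)(cz + d) + ac t² = t/2 - n t²` vanishes and the denominator is `2t²`, giving height `n`.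
-/

open Complex

/-- Height of a 2×2 complex matrix: max of the absolute values of its entries. -/
noncomputable def Hm (M : Matrix (Fin 2) (Fin 2) ℂ) : ℝ :=
  max (max (‖M 0 0‖) (‖M 0 1‖))
      (max (‖M 1 0‖) (‖M 1 1‖))

/-- The function D(z,t) = max {1, |z|, t⁻¹} on the upper half-space ℍ³. -/
noncomputable def Dht (z : ℂ) (t : ℝ) : ℝ := max 1 (max (‖z‖) t⁻¹)

/-- The generator ω of the ring of integers of ℚ(√-d) over ℤ. -/
noncomputable def omegaD (d : ℕ) : ℂ :=
  if d % 4 = 3 then (-1 + Complex.I * Real.sqrt d) / 2 else Complex.I * Real.sqrt d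

/-- The ring of integers O_d = ℤ[ω] of ℚ(√-d), as a subset of ℂ. -/
noncomputable def Od (d : ℕ) : Set ℂ :=
  {z | ∃ a b : ℤ, z = (a : ℂ) + (b : ℂ) * omegaD d}

/-- ⟨α, β⟩ = O_d : α and β generate the unit ideal of O_d. -/
def IsCoprimePair (d : ℕ) (α β : ℂ) : Prop :=
  ∃ x ∈ Od d, ∃ y ∈ Od d, α * x + β * y = 1

/-- The Möbius action of a matrix of SL(2,ℂ) on the upper half-space ℍ³. -/
noncomputable def mob (M : Matrix (Fin 2) (Fin 2) ℂ) (z : ℂ) (t : ℝ) : ℂ × ℝ :=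
  (((M 0 0 * z + M 0 1) * ((starRingEnd ℂ) (M 1 0) * (starRingEnd ℂ) z + (starRingEnd ℂ) (M 1 1))
        + M 0 0 * (starRingEnd ℂ) (M 1 0) * (t : ℂ) ^ 2) /
      ((((‖M 1 0 * z + M 1 1‖) ^ 2 + (‖M 1 0‖) ^ 2 * t ^ 2 : ℝ)) : ℂ),
   t / ((‖M 1 0 * z + M 1 1‖) ^ 2 + (‖M 1 0‖) ^ 2 * t ^ 2))

section sigmaMat

variable {R : Type*} [CommRing R]

def sigmaMat (x : R) : Matrix (Fin 2) (Fin 2) R :=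
  !![x, 1 - x ^ 2; -1, x]

theorem det_sigmaMat (x : R) : (sigmaMat x).det = 1 := by
  rw [sigmaMat, Matrix.det_fin_two_of]
  ring

theorem sigmaMat_map {S : Type*} [CommRing S] (f : R →+* S) (x : R) :
    (sigmaMat x).map f = sigmaMat (f x) := by
  ext i j
  fin_cases i <;> fin_cases j <;> simp [sigmaMat]

end sigmaMat

theorem mob_map_ofReal (M : Matrix (Fin 2) (Fin 2) ℝ) (x t : ℝ) :
    mob (M.map ofReal) x t =
      (↑(((M 0 0 * x + M 0 1) * (M 1 0 * x + M 1 1) + M 0 0 * M 1 0 * t ^ 2) /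
          ((M 1 0 * x + M 1 1) ^ 2 + M 1 0 ^ 2 * t ^ 2)),
        t / ((M 1 0 * x + M 1 1) ^ 2 + M 1 0 ^ 2 * t ^ 2)) := by
  simp only [mob, Matrix.map_apply, conj_ofReal, ← ofReal_mul, ← ofReal_add, ← ofReal_pow,
    norm_real, Real.norm_eq_abs, sq_abs, ← ofReal_div]

theorem mob_sigmaMat (x : ℝ) (hx : x ≠ 0) :
    mob ((sigmaMat x).map ofReal) (((2 * x ^ 2 - 1) / (2 * x) : ℝ) : ℂ) (1 / (2 * x)) = (0, x) := by
  rw [mob_map_ofReal]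
  simp only [sigmaMat, Matrix.of_apply, Matrix.cons_val', Matrix.cons_val_zero,
    Matrix.cons_val_one, Matrix.empty_val', Matrix.cons_val_fin_one,
    Prod.mk.injEq, ofReal_eq_zero]
  constructor <;> field_simp <;> ring

theorem sigma_n_sends (n : ℕ) (hn : 2 ≤ n) :
    (!![(n : ℂ), 1 - (n : ℂ) ^ 2; -1, (n : ℂ)] : Matrix (Fin 2) (Fin 2) ℂ).det = 1 ∧
    (∃ A : Matrix (Fin 2) (Fin 2) ℤ,
        (!![(n : ℂ), 1 - (n : ℂ) ^ 2; -1, (n : ℂ)] : Matrix (Fin 2) (Fin 2) ℂ)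
          = A.map (fun x => (x : ℂ))) ∧
    mob !![(n : ℂ), 1 - (n : ℂ) ^ 2; -1, (n : ℂ)]
        ((2 * (n : ℂ) ^ 2 - 1) / (2 * (n : ℂ))) (1 / (2 * (n : ℝ))) = (0, (n : ℝ)) := by
  change (sigmaMat (n : ℂ)).det = 1 ∧ (∃ A : Matrix (Fin 2) (Fin 2) ℤ,
    sigmaMat (n : ℂ) = A.map (Int.castRingHom ℂ)) ∧
    mob (sigmaMat ((n : ℝ) : ℂ)) ((2 * (n : ℂ) ^ 2 - 1) / (2 * (n : ℂ))) (1 / (2 * (n : ℝ))) = _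
  refine ⟨det_sigmaMat _, ⟨sigmaMat n, by rw [sigmaMat_map]; simp⟩, ?_⟩
  have hpoint : (2 * (n : ℂ) ^ 2 - 1) / (2 * (n : ℂ)) =
      (((2 * (n : ℝ) ^ 2 - 1) / (2 * (n : ℝ)) : ℝ) : ℂ) := by
    norm_cast
  rw [hpoint, ← ofRealHom_eq_coe, ← sigmaMat_map]
  exact mob_sigmaMat n (by positivity)
end

section
/- Let f be a positive definite binary Hermitian form with real entries a, d > 0, complex off-diagonal b, and discriminant Δ = ad - |b|² > 0. Define ξ(f) = (-b/a, √Δ/a) ∈ ℍ³, H(f) = max{a, |b|, d}, and D(z,t) = max{1, |z|, t⁻¹}. Then D(ξ(f)) ≤ H(f)/√Δ. -/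
open Complex

/-!
Write `s = √Δ` and `H = max {a, |b|, d}`. Since `s² + |b|² = ad ≤ aH ≤ H²`, we get `s ≤ H`, and by
AM–GM `|b| s ≤ ad / 2 ≤ aH`. These are exactly the bounds `1 ≤ H / s`, `|b| / a ≤ H / s` needed for
the first two terms of `D(ξ(f)) = max {1, |b| / a, a / s}`; the third is `a ≤ H`.
-/

lemma Real.sqrt_mul_sub_sq_le_max {a d : ℝ} (x : ℝ) (ha : 0 ≤ a) :
    √(a * d - x ^ 2) ≤ max a (max x d) := by
  have haH : a ≤ max a (max x d) := le_max_left _ _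
  have hdH : d ≤ max a (max x d) := (le_max_right _ _).trans (le_max_right _ _)
  rw [Real.sqrt_le_left (ha.trans haH)]
  nlinarith [sq_nonneg x, mul_le_mul_of_nonneg_left hdH ha]

lemma Real.mul_sqrt_mul_sub_sq_le {a d x : ℝ} (h : 0 ≤ a * d - x ^ 2) :
    x * √(a * d - x ^ 2) ≤ a * d / 2 := by
  nlinarith [Real.sq_sqrt h, sq_nonneg (x - √(a * d - x ^ 2))]

theorem D_of_xi_le_general (a d : ℝ) (b : ℂ) (ha : 0 < a)
    (hΔ : 0 < a * d - (‖b‖) ^ 2) :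
    Dht (-(b / (a : ℂ))) (Real.sqrt (a * d - (‖b‖) ^ 2) / a)
      ≤ max a (max (‖b‖) d) / Real.sqrt (a * d - (‖b‖) ^ 2) := by
  set H := max a (max (‖b‖) d)
  have hs : 0 < √(a * d - ‖b‖ ^ 2) := Real.sqrt_pos.mpr hΔ
  have hsH : √(a * d - ‖b‖ ^ 2) ≤ H := Real.sqrt_mul_sub_sq_le_max _ ha.le
  have hbs : ‖b‖ * √(a * d - ‖b‖ ^ 2) ≤ a * d / 2 := Real.mul_sqrt_mul_sub_sq_le hΔ.le
  have hdH : d ≤ H := (le_max_right _ _).trans (le_max_right _ _)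
  have hnorm : ‖-(b / (a : ℂ))‖ = ‖b‖ / a := by
    rw [norm_neg, norm_div, Complex.norm_real, Real.norm_of_nonneg ha.le]
  rw [Dht, hnorm, inv_div]
  refine max_le ((one_le_div hs).2 hsH) (max_le ?_ ?_)
  · rw [div_le_div_iff₀ ha hs]
    nlinarith [mul_le_mul_of_nonneg_left hdH ha.le]
  · exact div_le_div_of_nonneg_right (le_max_left _ _) hs.le

theorem D_of_xi_le (a d : ℝ) (b : ℂ) (ha : 0 < a) (hd : 0 < d)
    (hΔ : 0 < a * d - (‖b‖) ^ 2) :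
    Dht (-(b / (a : ℂ))) (Real.sqrt (a * d - (‖b‖) ^ 2) / a)
      ≤ max a (max (‖b‖) d) / Real.sqrt (a * d - (‖b‖) ^ 2) :=
  D_of_xi_le_general a d b ha hΔ
end
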